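/- arXiv:1602.00960 — 2 statements merged into one kernel-verified Lean document; each statement's English description precedes it below -/
import Mathlib

section
/- For convex bodies C, K in ℂ, the complex difference body operator is symmetric: D_C K = D_K C. -/
open MeasureTheory Pointwise

/-- The support function of a set `A` in the direction `ξ`. -/
noncomputable def hsupp {V : Type*} [NormedAddCommGroup V] [InnerProductSpace ℂ V]
    (A : Set V) (ξ : V) : ℝ :=
  sSup ((fun x => (inner ℂ x ξ : ℂ).re) '' A)

instance : Fact (0 < 2 * Real.pi) := ⟨by positivity⟩

/-- The representative in `[0, 2π)` of a point of the circle `ℝ/2πℤ`. -/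
noncomputable def angRepr (x : AddCircle (2 * Real.pi)) : ℝ :=
  (AddCircle.equivIco (2 * Real.pi) 0 x : ℝ)

/-- The support function of a planar set as a `2π`-periodic function of the angle. -/
noncomputable def hfun (A : Set ℂ) (θ : ℝ) : ℝ := hsupp A (Complex.exp (θ * Complex.I))

/-- `μ` is the surface area measure of the planar convex body with underlying set `L`:
for every `C²` `2π`-periodic test function `φ`, `∫ φ dμ = ∫ h_L (φ'' + φ)`. -/
def IsSAM (L : Set ℂ) (μ : Measure (AddCircle (2 * Real.pi))) : Prop :=
  ∀ φ : ℝ → ℝ, ContDiff ℝ 2 φ → (∀ t, φ (t + 2 * Real.pi) = φ t) →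
    ∫ x, φ (angRepr x) ∂μ
      = ∫ t in (0:ℝ)..(2 * Real.pi), hfun L t * (deriv (deriv φ) t + φ t)

/-- `D = D_C K`: `h(D, ξ) = ∫_{S¹} h(αK, ξ) dS(C, α)`, where `μ` is the surface area
measure of `C` and `α • K` is the action of `α = e^{iθ} ∈ S¹` by complex scalar
multiplication. -/
def IsCDB {V : Type*} [NormedAddCommGroup V] [InnerProductSpace ℂ V]
    (μ : Measure (AddCircle (2 * Real.pi))) (K D : Set V) : Prop :=
  ∀ ξ : V, hsupp D ξ = ∫ x, hsupp (Complex.exp (angRepr x * Complex.I) • K) ξ ∂μ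

/-!
Write `ξ = ‖ξ‖ e^{iθ}`. Rotating `K` by `e^{iα}` shifts its support function by `α`, so
`h(D_C K, ξ) = ‖ξ‖ (S(C,·) * h_K)(θ)`, a convolution on the circle of directions. Testing the
defining identity of `S(C,·)` against `e^{-inθ}`, whose second derivative is `-n² e^{-inθ}`, gives
`Ŝ(C,·)(n) = 2π (1 - n²) ĥ_C(n)`; hence the Fourier coefficients of `S(C,·) * h_K` are
`2π (1 - n²) ĥ_C(n) ĥ_K(n)`, symmetric in `C` and `K`. Continuous functions on the circle are
determined by their Fourier coefficients, and convex bodies by their support functions.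
-/

open Complex Bornology

local notation "𝕋" => AddCircle (2 * Real.pi)

section SupportFunction

variable {V : Type*} [NormedAddCommGroup V] [InnerProductSpace ℂ V]

lemma hsupp_smul_set (A : Set V) (α : ℂ) (ξ : V) :
    hsupp (α • A) ξ = hsupp A ((starRingEnd ℂ) α • ξ) := by
  unfold hsupp
  rw [← Set.image_smul, Set.image_image]
  refine congrArg sSup (Set.image_congr fun x _ => ?_)
  rw [inner_smul_left, inner_smul_right]

lemma hsupp_real_smul (A : Set V) {r : ℝ} (hr : 0 ≤ r) (ξ : V) :
    hsupp A (r • ξ) = r * hsupp A ξ := by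
  unfold hsupp
  rw [← smul_eq_mul, ← Real.sSup_smul_of_nonneg hr, ← Set.image_smul, Set.image_image]
  refine congrArg sSup (Set.image_congr fun x _ => ?_)
  simp

lemma bddAbove_inner_re_image {A : Set V} (hA : IsBounded A) (ξ : V) :
    BddAbove ((fun x => (inner ℂ x ξ).re) '' A) := by
  obtain ⟨R, hR⟩ := hA.exists_norm_le
  refine ⟨R * ‖ξ‖, Set.forall_mem_image.2 fun x hx => ?_⟩
  calc (inner ℂ x ξ).re ≤ ‖inner ℂ x ξ‖ := re_le_norm _
    _ ≤ ‖x‖ * ‖ξ‖ := norm_inner_le_norm _ _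
    _ ≤ R * ‖ξ‖ := by gcongr; exact hR x hx

lemma inner_re_le_hsupp {A : Set V} (hA : IsBounded A) {x : V} (hx : x ∈ A) (ξ : V) :
    (inner ℂ x ξ).re ≤ hsupp A ξ :=
  le_csSup (bddAbove_inner_re_image hA ξ) ⟨x, hx, rfl⟩

lemma hsupp_le {A : Set V} (hA : A.Nonempty) {ξ : V} {u : ℝ}
    (h : ∀ x ∈ A, (inner ℂ x ξ).re ≤ u) : hsupp A ξ ≤ u :=
  csSup_le (hA.image _) (Set.forall_mem_image.2 h)

lemma hsupp_le_hsupp_add {A : Set V} (hA : A.Nonempty) {R : ℝ} (hR : ∀ x ∈ A, ‖x‖ ≤ R)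
    (ξ η : V) : hsupp A ξ ≤ hsupp A η + R * ‖ξ - η‖ := by
  refine hsupp_le hA fun x hx => ?_
  have hη := inner_re_le_hsupp (isBounded_iff_forall_norm_le.2 ⟨R, hR⟩) hx η
  have hdiff : (inner ℂ x (ξ - η)).re ≤ R * ‖ξ - η‖ :=
    calc (inner ℂ x (ξ - η)).re ≤ ‖x‖ * ‖ξ - η‖ := (re_le_norm _).trans (norm_inner_le_norm _ _)
      _ ≤ R * ‖ξ - η‖ := by gcongr; exact hR x hx
  rw [inner_sub_right, sub_re] at hdiff
  linarith

lemma continuous_hsupp {A : Set V} (hA : A.Nonempty) (hb : IsBounded A) :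
    Continuous (hsupp A) := by
  obtain ⟨R, hR⟩ := hb.exists_norm_le
  refine (LipschitzWith.of_le_add_mul' R fun ξ η => ?_).continuous
  simpa [dist_eq_norm] using hsupp_le_hsupp_add hA hR ξ η

end SupportFunction

lemma exists_inner_re_eq (f : StrongDual ℝ ℂ) : ∃ ξ : ℂ, ∀ z, f z = (inner ℂ z ξ).re := by
  refine ⟨(InnerProductSpace.toDual ℝ ℂ).symm f, fun z => ?_⟩
  rw [← InnerProductSpace.toDual_symm_apply, Complex.inner]
  simp [mul_comm]

lemma subset_of_hsupp_le {A B : Set ℂ} (hA : IsBounded A) (hBne : B.Nonempty)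
    (hBconv : Convex ℝ B) (hBcl : IsClosed B) (h : ∀ ξ, hsupp A ξ ≤ hsupp B ξ) : A ⊆ B := by
  intro x hx
  by_contra hxB
  obtain ⟨f, u, hfB, hfx⟩ := geometric_hahn_banach_closed_point hBconv hBcl hxB
  obtain ⟨ξ, hξ⟩ := exists_inner_re_eq f
  have hB : hsupp B ξ ≤ u := hsupp_le hBne fun b hb => hξ b ▸ (hfB b hb).le
  have hA : f x ≤ hsupp A ξ := hξ x ▸ inner_re_le_hsupp hA hx ξ
  linarith [h ξ]

lemma ConvexBody.coe_eq_of_hsupp_eq (K L : ConvexBody ℂ)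
    (h : ∀ ξ, hsupp (K : Set ℂ) ξ = hsupp (L : Set ℂ) ξ) : (K : Set ℂ) = L :=
  (subset_of_hsupp_le K.isBounded L.nonempty L.convex L.isClosed fun ξ => (h ξ).le).antisymm
    (subset_of_hsupp_le L.isBounded K.nonempty K.convex K.isClosed fun ξ => (h ξ).ge)

lemma Function.Periodic.continuous_lift {X : Type*} [TopologicalSpace X] {f : ℝ → X} {p : ℝ}
    (hf : Function.Periodic f p) (hc : Continuous f) : Continuous hf.lift :=
  (QuotientAddGroup.isQuotientMap_mk _).continuous_iff.2 hc

lemma hfun_periodic (A : Set ℂ) : Function.Periodic (hfun A) (2 * Real.pi) := by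
  intro t
  simp only [hfun, ofReal_add, ofReal_mul, ofReal_ofNat, add_mul, exp_add, exp_two_pi_mul_I,
    mul_one]

noncomputable def hsuppCircle (A : Set ℂ) : 𝕋 → ℝ := (hfun_periodic A).lift

lemma continuous_hfun {A : Set ℂ} (hA : A.Nonempty) (hb : IsBounded A) :
    Continuous (hfun A) :=
  (continuous_hsupp hA hb).comp (by fun_prop)

lemma continuous_hsuppCircle {A : Set ℂ} (hA : Continuous (hfun A)) :
    Continuous (hsuppCircle A) :=
  (hfun_periodic A).continuous_lift hA

lemma coe_angRepr (x : 𝕋) : ((angRepr x : ℝ) : 𝕋) = x :=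
  (AddCircle.equivIco (2 * Real.pi) 0).symm_apply_apply x

lemma hsupp_exp_smul (A : Set ℂ) (x : 𝕋) (ξ : ℂ) :
    hsupp (exp (angRepr x * I) • A) ξ = ‖ξ‖ * hsuppCircle A (arg ξ - x) := by
  have hξ : ξ = ‖ξ‖ • exp (arg ξ * I) := by
    rw [real_smul, norm_mul_exp_arg_mul_I]
  rw [hξ, hsupp_real_smul _ (norm_nonneg _), hsupp_smul_set, ← hξ]
  congr 1
  conv_rhs => rw [← coe_angRepr x, ← AddCircle.coe_sub]
  simp only [hsuppCircle, Function.Periodic.lift_coe, hfun, ← exp_conj, smul_eq_mul, ← exp_add]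
  congr 2
  simp only [map_mul, conj_ofReal, conj_I, mul_neg, ofReal_sub]
  ring

section CircleConvolution

variable {T : ℝ}

noncomputable def circleConv {E : Type*} [NormedAddCommGroup E] [NormedSpace ℝ E]
    (μ : Measure (AddCircle T)) (f : AddCircle T → E) (y : AddCircle T) : E :=
  ∫ x, f (y - x) ∂μ

lemma ofReal_circleConv (μ : Measure (AddCircle T)) (f : AddCircle T → ℝ) (y : AddCircle T) :
    ((circleConv μ f y : ℝ) : ℂ) = circleConv μ (fun x => (f x : ℂ)) y :=
  integral_ofReal.symm

lemma continuous_circleConv [Fact (0 < T)] {E : Type*} [NormedAddCommGroup E] [NormedSpace ℝ E]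
    (μ : Measure (AddCircle T)) [IsFiniteMeasure μ] {f : AddCircle T → E} (hf : Continuous f) :
    Continuous (circleConv μ f) := by
  unfold circleConv
  have := continuous_parametric_integral_of_continuous (μ := μ)
    (f := fun y x : AddCircle T => f (y - x)) (by fun_prop) isCompact_univ
  simpa only [Measure.restrict_univ] using this

lemma fourier_add_apply (n : ℤ) (x y : AddCircle T) :
    fourier n (x + y) = fourier n x * fourier n y := by
  simp only [fourier_apply, smul_add, AddCircle.toCircle_add, Circle.coe_mul]

lemma fourierCoeff_circleConv [Fact (0 < T)] (μ : Measure (AddCircle T)) [IsFiniteMeasure μ]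
    {f : AddCircle T → ℂ} (hf : Continuous f) (n : ℤ) :
    fourierCoeff (circleConv μ f) n = (∫ x, fourier (-n) x ∂μ) * fourierCoeff f n := by
  have hshift (x : AddCircle T) :
      ∫ y, fourier (-n) y * f (y - x) ∂AddCircle.haarAddCircle
        = fourier (-n) x * fourierCoeff f n := by
    rw [← integral_add_right_eq_self _ x, fourierCoeff, ← integral_const_mul]
    simp only [fourier_add_apply, add_sub_cancel_right, smul_eq_mul]
    congr 1 with y
    ring
  calc fourierCoeff (circleConv μ f) n
      = ∫ y, ∫ x, fourier (-n) y * f (y - x) ∂μ ∂AddCircle.haarAddCircle := by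
        simp only [fourierCoeff, circleConv, smul_eq_mul, integral_const_mul]
    _ = ∫ x, ∫ y, fourier (-n) y * f (y - x) ∂AddCircle.haarAddCircle ∂μ :=
        integral_integral_swap_of_hasCompactSupport (by fun_prop)
          (isClosed_tsupport _).isCompact
    _ = (∫ x, fourier (-n) x ∂μ) * fourierCoeff f n := by
        simp only [hshift, integral_mul_const]

lemma eq_of_fourierCoeff_eq [Fact (0 < T)] {f g : AddCircle T → ℂ} (hf : Continuous f)
    (hg : Continuous g)
    (h : ∀ n, fourierCoeff f n = fourierCoeff g n) : f = g := by
  have : (⟨f, hf⟩ : C(AddCircle T, ℂ)) = ⟨g, hg⟩ := by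
    apply ContinuousMap.toLp_injective (E := ℂ) (p := 2) (𝕜 := ℂ) AddCircle.haarAddCircle
    apply fourierBasis.repr.injective
    ext n
    simpa only [fourierBasis_repr, fourierCoeff_toLp, ContinuousMap.coe_mk] using h n
  exact congrArg DFunLike.coe this

end CircleConvolution

lemma fourier_coe_two_pi (n : ℤ) (t : ℝ) : fourier n (t : 𝕋) = exp (n * I * t) := by
  rw [fourier_coe_apply]
  congr 1
  field_simp
  push_cast
  ring

lemma hasDerivAt_cexp_mul_ofReal (c : ℂ) (t : ℝ) :
    HasDerivAt (fun t : ℝ => exp (c * t)) (c * exp (c * t)) t := by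
  simpa [mul_comm] using ((hasDerivAt_id t).ofReal_comp.const_mul c).cexp

lemma deriv_deriv_cexp_mul_ofReal (c : ℂ) :
    deriv (deriv fun t : ℝ => exp (c * t)) = fun t : ℝ => c ^ 2 * exp (c * t) := by
  have hd : deriv (fun t : ℝ => exp (c * t)) = fun t : ℝ => c * exp (c * t) :=
    funext fun t => (hasDerivAt_cexp_mul_ofReal c t).deriv
  rw [hd]
  funext t
  rw [((hasDerivAt_cexp_mul_ofReal c t).const_mul c).deriv, sq, mul_assoc]

lemma ContinuousLinearMap.deriv_comp {E F : Type*} [NormedAddCommGroup E] [NormedSpace ℝ E]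
    [NormedAddCommGroup F] [NormedSpace ℝ F] (L : E →L[ℝ] F) {f : ℝ → E}
    (hf : Differentiable ℝ f) : deriv (fun t => L (f t)) = fun t => L (deriv f t) :=
  funext fun t => (L.hasFDerivAt.comp_hasDerivAt t (hf t).hasDerivAt).deriv

namespace IsSAM

variable {L : Set ℂ} {μ : Measure 𝕋} [IsFiniteMeasure μ]

lemma integral_complex (hμ : IsSAM L μ) (hL : Continuous (hfun L)) {φ : ℝ → ℂ}
    (hφ : ContDiff ℝ 2 φ) (hper : Function.Periodic φ (2 * Real.pi)) :
    ∫ x, φ (angRepr x) ∂μ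
      = ∫ t in (0:ℝ)..(2 * Real.pi), (hfun L t : ℂ) * (deriv (deriv φ) t + φ t) := by
  have hφ₁ : Differentiable ℝ φ := hφ.differentiable two_ne_zero
  have hφ₂ : Differentiable ℝ (deriv φ) := hφ.differentiable_deriv_two
  have hφ'' : Continuous (deriv (deriv φ)) := (hφ.deriv' (n := 1)).continuous_deriv_one
  have hlift : (fun x => φ (angRepr x)) = hper.lift :=
    funext fun x => by rw [← hper.lift_coe, coe_angRepr]
  have hint : Integrable (fun x => φ (angRepr x)) μ := by
    rw [hlift]
    exact (hper.continuous_lift hφ₁.continuous).integrable_of_hasCompactSupport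
      (HasCompactSupport.of_compactSpace _)
  have hint' : IntervalIntegrable (fun t => (hfun L t : ℂ) * (deriv (deriv φ) t + φ t)) volume
      0 (2 * Real.pi) :=
    (by fun_prop : Continuous _).intervalIntegrable _ _
  have key (Λ : ℂ →L[ℝ] ℝ) : Λ (∫ x, φ (angRepr x) ∂μ)
      = Λ (∫ t in (0:ℝ)..(2 * Real.pi), (hfun L t : ℂ) * (deriv (deriv φ) t + φ t)) := by
    rw [← Λ.integral_comp_comm hint, ← Λ.intervalIntegral_comp_comm hint']
    convert hμ (fun t => Λ (φ t)) (Λ.contDiff.comp hφ) (fun t => by simp only [hper t]) using 2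
    ext t
    rw [Λ.deriv_comp hφ₁, Λ.deriv_comp hφ₂, ← real_smul, Λ.map_smul, map_add, smul_eq_mul]
  exact Complex.ext (by simpa using key reCLM) (by simpa using key imCLM)

lemma integral_fourier (hμ : IsSAM L μ) (hL : Continuous (hfun L)) (n : ℤ) :
    ∫ x, fourier (-n) x ∂μ
      = 2 * Real.pi * (1 - n ^ 2) * fourierCoeff (fun y => (hsuppCircle L y : ℂ)) n := by
  set c : ℂ := ((-n : ℤ) : ℂ) * I with hc
  have hφ (t : ℝ) : fourier (-n) (t : 𝕋) = exp (c * t) := fourier_coe_two_pi (-n) t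
  have hper : Function.Periodic (fun t : ℝ => exp (c * t)) (2 * Real.pi) := fun t => by
    simp only [← hφ, AddCircle.coe_add_period]
  have hsam := hμ.integral_complex hL (φ := fun t : ℝ => exp (c * t))
    (contDiff_const.mul ofRealCLM.contDiff).cexp hper
  rw [deriv_deriv_cexp_mul_ofReal] at hsam
  calc ∫ x, fourier (-n) x ∂μ = ∫ x, exp (c * angRepr x) ∂μ := by simp_rw [← hφ, coe_angRepr]
    _ = (1 + c ^ 2) * ∫ t in (0:ℝ)..(2 * Real.pi), exp (c * t) * hfun L t := by
      rw [hsam, ← intervalIntegral.integral_const_mul]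
      congr 1 with t
      ring
    _ = _ := by
      have hc2 : c ^ 2 = -n ^ 2 := by simp [hc, mul_pow]
      rw [fourierCoeff_eq_intervalIntegral _ n 0, zero_add, real_smul, hc2]
      simp only [hφ, hsuppCircle, Function.Periodic.lift_coe, smul_eq_mul]
      push_cast
      field_simp
      ring

end IsSAM

lemma IsCDB.hsupp_eq {μ : Measure 𝕋} {K D : Set ℂ} (h : IsCDB μ K D) (ξ : ℂ) :
    hsupp D ξ = ‖ξ‖ * circleConv μ (hsuppCircle K) (arg ξ) := by
  simp only [h ξ, hsupp_exp_smul, circleConv, integral_const_mul]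

lemma circleConv_hsuppCircle_comm (C K : ConvexBody ℂ) (μC μK : Measure 𝕋)
    [IsFiniteMeasure μC] [IsFiniteMeasure μK]
    (hμC : IsSAM (C : Set ℂ) μC) (hμK : IsSAM (K : Set ℂ) μK) :
    circleConv μC (hsuppCircle K) = circleConv μK (hsuppCircle C) := by
  have hcont (L : ConvexBody ℂ) : Continuous (hfun L) := continuous_hfun L.nonempty L.isBounded
  have hcont' (L : ConvexBody ℂ) : Continuous fun y => (hsuppCircle L y : ℂ) :=
    continuous_ofReal.comp (continuous_hsuppCircle (hcont L))
  have hcoeff : circleConv μC (fun y => (hsuppCircle K y : ℂ))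
      = circleConv μK (fun y => (hsuppCircle C y : ℂ)) := by
    refine eq_of_fourierCoeff_eq (continuous_circleConv μC (hcont' K))
      (continuous_circleConv μK (hcont' C)) fun n => ?_
    rw [fourierCoeff_circleConv μC (hcont' K), fourierCoeff_circleConv μK (hcont' C),
      hμC.integral_fourier (hcont C), hμK.integral_fourier (hcont K)]
    ring
  funext y
  exact_mod_cast (ofReal_circleConv μC _ y).trans ((congrFun hcoeff y).trans
    (ofReal_circleConv μK _ y).symm)

/-- for planar convex bodies `C, K`, the complex difference body operator is
symmetric: `D_C K = D_K C`. -/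
theorem stmt_9 (C K D₁ D₂ : ConvexBody ℂ)
    (μC μK : Measure (AddCircle (2 * Real.pi)))
    [IsFiniteMeasure μC] [IsFiniteMeasure μK]
    (hμC : IsSAM (C : Set ℂ) μC) (hμK : IsSAM (K : Set ℂ) μK)
    (h₁ : IsCDB μC (K : Set ℂ) (D₁ : Set ℂ))
    (h₂ : IsCDB μK (C : Set ℂ) (D₂ : Set ℂ)) :
    (D₁ : Set ℂ) = (D₂ : Set ℂ) := by
  refine D₁.coe_eq_of_hsupp_eq D₂ fun ξ => ?_
  rw [h₁.hsupp_eq, h₂.hsupp_eq, circleConv_hsuppCircle_comm C K μC μK hμC hμK]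
end

section
/- Let C_N ⊂ ℂ be a regular polygon with N sides each of length 1/N, with outer unit edge normals α₁,…,α_N ∈ S¹ forming a cyclic group of order N under complex multiplication. Then for a convex body K in ℂ^m: D_{C_N} K = K if and only if α_i K = K for all i = 1,…,N. -/
/-!
If every `α i` fixes `K`, the Minkowski average `N⁻¹ • ∑ i, α i • K` is the average of `N`
copies of the convex set `K`, which is `K`. Conversely, since the normals form a group,
multiplication by `α j` permutes them, so `D` is invariant under `α j`; if `D = K` then `K` is too.
-/

open Pointwise Finset

theorem Convex.sum_const_eq_card_smul {𝕜 E ι : Type*} [Field 𝕜] [LinearOrder 𝕜]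
    [IsStrictOrderedRing 𝕜] [AddCommGroup E] [Module 𝕜 E] {s : Set E}
    (hs : Convex 𝕜 s) (hne : s.Nonempty) (t : Finset ι) :
    ∑ _i ∈ t, s = (#t : 𝕜) • s := by
  classical
  induction t using Finset.induction_on with
  | empty => simp [Set.zero_smul_set hne]
  | insert a u ha ih =>
    rw [sum_insert ha, ih, card_insert_of_notMem ha, Nat.cast_add, Nat.cast_one,
      hs.add_smul (Nat.cast_nonneg _) zero_le_one, one_smul, add_comm]

theorem exists_equiv_mul_left_eq {ι M : Type*} [Finite ι] [Mul M] {α : ι → M}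
    (hinj : Function.Injective α) (hmul : ∀ i j, ∃ k, α i * α j = α k) {j : ι}
    (hj : IsLeftRegular (α j)) : ∃ σ : ι ≃ ι, ∀ i, α j * α i = α (σ i) := by
  choose σ hσ using hmul j
  have hσinj : Function.Injective σ := fun i i' h ↦
    hinj <| hj <| by simp only [hσ, h]
  exact ⟨Equiv.ofBijective σ (Finite.injective_iff_bijective.mp hσinj), hσ⟩

theorem smul_sum_smul_eq_of_equiv {ι M A : Type*} [Fintype ι] [Monoid M] [AddCommMonoid A]
    [DistribMulAction M A] {α : ι → M} {c : M} (σ : ι ≃ ι) (hσ : ∀ i, c * α i = α (σ i))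
    (a : A) : c • ∑ i, α i • a = ∑ i, α i • a := by
  simp only [smul_sum, smul_smul, hσ]
  exact σ.sum_comp (fun i ↦ α i • a)

/-- let `C_N ⊂ ℂ` be a regular polygon with `N` sides of length `1/N`,
whose outer unit normals `α₁, …, α_N ∈ S¹` form a (cyclic) group under complex
multiplication, so that `D_{C_N} K = (1/N) ∑ i, α i • K`. Then `D_{C_N} K = K` iff
`α i • K = K` for all `i`. -/
theorem stmt_17 (m N : ℕ) (hN : 0 < N) (α : Fin N → ℂ)
    (hα : ∀ i, ‖α i‖ = 1) (hinj : Function.Injective α)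
    (hgrp : ∀ i j, ∃ k, α i * α j = α k)
    (K D : ConvexBody (EuclideanSpace ℂ (Fin m)))
    (hD : (D : Set (EuclideanSpace ℂ (Fin m)))
        = (N : ℝ)⁻¹ • ∑ i, α i • (K : Set (EuclideanSpace ℂ (Fin m)))) :
    (D : Set (EuclideanSpace ℂ (Fin m))) = (K : Set (EuclideanSpace ℂ (Fin m))) ↔
      ∀ i, α i • (K : Set (EuclideanSpace ℂ (Fin m)))
        = (K : Set (EuclideanSpace ℂ (Fin m))) := by
  constructor
  · intro hDK j
    have hj : IsLeftRegular (α j) :=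
      (IsRegular.of_ne_zero (norm_ne_zero_iff.mp (by simp [hα j]))).left
    obtain ⟨σ, hσ⟩ := exists_equiv_mul_left_eq hinj hgrp hj
    have hDinv : α j • (D : Set (EuclideanSpace ℂ (Fin m))) = D := by
      rw [hD, smul_comm, smul_sum_smul_eq_of_equiv σ hσ]
    rwa [← hDK]
  · intro hinv
    rw [hD, sum_congr rfl fun i _ ↦ hinv i, K.convex.sum_const_eq_card_smul K.nonempty,
      card_univ, Fintype.card_fin, smul_smul, inv_mul_cancel₀ (by exact_mod_cast hN.ne'),
      one_smul]
end
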